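/- Let ν be strictly dominant, N ∈ ℤ, m > 0 an integer, and let T ⊆ U_N satisfy T·U_{m,N} ⊆ T. Then the set {g ∈ U_N : f_ν(g) ∈ T} is stable under right multiplication by U_{m,N}: if g ∈ U_N with f_ν(g) ∈ T and u ∈ U_{m,N}, then f_ν(g·u) ∈ T. Moreover, for g ∈ U_N, the coset f_ν(g)·U_{m,N} meets T if and only if f_ν(g) ∈ T; hence in the quotient U_N/U_{m,N} the preimage of T/U_{m,N} under the map induced by f_ν equals f_ν⁻¹(T)/U_{m,N}. -/

import Mathlib

/-!
Write `σ_ν(u) = ε^ν σ(u) ε^{-ν}`, so that `f_ν(g u) = u⁻¹ f_ν(g) σ_ν(u)`.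
Put `U_{c,N} = 1 + 𝔫_{c,N}`, where `𝔫_{c,N}` is the additive group of strictly upper triangular
matrices `x` with `val x_{pq} ≥ (q - p) N + c`; then `𝔫_{a,N} 𝔫_{b,N} ⊆ 𝔫_{a+b,N}`. For `m ≥ 0`
this makes `U_{m,N}` a group (inverses come from the geometric series of the nilpotent `g - 1`),
normalised by `U_N = U_{0,N}`. Since `ν` is dominant, `σ_ν` multiplies the `(p, q)` entry by
`ε^{ν_p - ν_q}` with `ν_p ≥ ν_q`, so it preserves `U_{m,N}`. Hence for `h = f_ν(g) ∈ T ⊆ U_N`,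
`f_ν(g u) = h · (h⁻¹ u⁻¹ h) · σ_ν(u) ∈ h U_{m,N} ⊆ T`.
-/

noncomputable section

open Matrix

/-- The ε-adic valuation on `L = k̄((ε))`, with `val 0 = ∞`. -/
def val {K : Type*} [Field K] (x : LaurentSeries K) : WithTop ℤ := x.orderTop

/-- The uniformizer ε of the Laurent series field. -/
def eps (K : Type*) [Field K] : LaurentSeries K := HahnSeries.single 1 1

/-- `σ : L → L` is the Frobenius automorphism: it fixes ε and raises each Laurent-series
coefficient to the `q`-th power.  (This property determines `σ` uniquely.) -/
def IsFrobenius (K : Type*) [Field K] (q : ℕ)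
    (σ : LaurentSeries K → LaurentSeries K) : Prop :=
  ∀ (x : LaurentSeries K) (n : ℤ), (σ x).coeff n = (x.coeff n) ^ q

/-- Upper unitriangular matrix: an element of `U_1`. -/
def Unitri {K : Type*} [Field K] {n : ℕ}
    (g : Matrix (Fin n) (Fin n) (LaurentSeries K)) : Prop :=
  (∀ i, g i i = 1) ∧ (∀ i j : Fin n, j < i → g i j = 0)

/-- `ν = (ν_1, …, ν_n)` is strictly dominant: `ν_1 > ν_2 > … > ν_n`. -/
def StrictDominant {n : ℕ} (ν : Fin n → ℤ) : Prop :=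
  ∀ p q : Fin n, p < q → ν q < ν p

/-- The diagonal matrix `ε^ν = diag(ε^{ν_1}, …, ε^{ν_n})`. -/
def epsDiag (K : Type*) [Field K] {n : ℕ} (ν : Fin n → ℤ) :
    Matrix (Fin n) (Fin n) (LaurentSeries K) :=
  Matrix.diagonal fun i => eps K ^ (ν i)

/-- The map `f_ν : U_1 → U_1`, `f_ν(h) = h⁻¹ · ε^ν · σ(h) · ε^{−ν}`. -/
def fnu {K : Type*} [Field K] {n : ℕ} (σ : LaurentSeries K → LaurentSeries K)
    (ν : Fin n → ℤ) (g : Matrix (Fin n) (Fin n) (LaurentSeries K)) :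
    Matrix (Fin n) (Fin n) (LaurentSeries K) :=
  g⁻¹ * epsDiag K ν * g.map σ * epsDiag K (fun i => -ν i)

/-- The subgroup `U(o_L)` of `U_1`: unitriangular matrices with entries in `o_L`. -/
def UO (K : Type*) [Field K] (n : ℕ) :
    Set (Matrix (Fin n) (Fin n) (LaurentSeries K)) :=
  {g | Unitri g ∧ ∀ p q : Fin n, 0 ≤ val (g p q)}

/-- `U_N = {g ∈ U_1 : val(g_{pq}) ≥ (q−p)·N for all p < q}`
(equivalently `ε^{−μ}·U(o_L)·ε^{μ}` for `μ = (N, 2N, …, nN)`). -/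
def UN (K : Type*) [Field K] (n : ℕ) (N : ℤ) :
    Set (Matrix (Fin n) (Fin n) (LaurentSeries K)) :=
  {g | Unitri g ∧ ∀ p q : Fin n, p < q →
    ((((q : ℤ) - (p : ℤ)) * N : ℤ) : WithTop ℤ) ≤ val (g p q)}

/-- `U_{m,N} = {g ∈ U_1 : val(g_{pq}) ≥ (q−p)·N + m for all p < q}`. -/
def UmN (K : Type*) [Field K] (n : ℕ) (m N : ℤ) :
    Set (Matrix (Fin n) (Fin n) (LaurentSeries K)) :=
  {g | Unitri g ∧ ∀ p q : Fin n, p < q →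
    ((((q : ℤ) - (p : ℤ)) * N + m : ℤ) : WithTop ℤ) ≤ val (g p q)}

namespace HahnSeries

variable {Γ R S : Type*} [AddCommMonoid Γ] [PartialOrder Γ] [IsOrderedCancelAddMonoid Γ]
  [Semiring R] [Semiring S]

def mapRingHom (f : R →+* S) : HahnSeries Γ R →+* HahnSeries Γ S where
  toFun x := x.map f
  map_one' := HahnSeries.map_one f.toMonoidWithZeroHom
  map_mul' _ _ := HahnSeries.map_mul f.toNonUnitalRingHom
  map_zero' := HahnSeries.map_zero f.toMonoidWithZeroHom.toZeroHom
  map_add' _ _ := HahnSeries.map_add f.toAddMonoidHom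

@[simp]
lemma coeff_mapRingHom (f : R →+* S) (x : HahnSeries Γ R) (g : Γ) :
    (mapRingHom f x).coeff g = f (x.coeff g) := rfl

end HahnSeries

lemma Matrix.pow_card_eq_zero_of_strictUpper {ι R : Type*} [Fintype ι] [LinearOrder ι]
    [CommRing R] {x : Matrix ι ι R} (hx : ∀ i j, j ≤ i → x i j = 0) :
    x ^ Fintype.card ι = 0 := by
  have hchar : x.charpoly = Polynomial.X ^ Fintype.card ι := by
    rw [Matrix.charpoly_of_isUpperTriangular x fun i j hji => hx i j hji.le]
    simp [hx _ _ le_rfl]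
  simpa [hchar] using Matrix.aeval_self_charpoly x

section

variable {K : Type*} [Field K]

lemma val_eq_addVal (x : LaurentSeries K) : val x = HahnSeries.addVal ℤ K x :=
  HahnSeries.addVal_apply.symm

lemma val_zero : val (0 : LaurentSeries K) = ⊤ := HahnSeries.orderTop_zero

lemma val_neg (x : LaurentSeries K) : val (-x) = val x := HahnSeries.orderTop_neg

lemma min_val_le_val_add (x y : LaurentSeries K) : min (val x) (val y) ≤ val (x + y) :=
  HahnSeries.min_orderTop_le_orderTop_add

lemma val_mul (x y : LaurentSeries K) : val (x * y) = val x + val y := by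
  simp only [val_eq_addVal, AddValuation.map_mul]

lemma le_val_sum {ι : Type*} {s : Finset ι} {f : ι → LaurentSeries K} {c : WithTop ℤ}
    (h : ∀ i ∈ s, c ≤ val (f i)) : c ≤ val (∑ i ∈ s, f i) := by
  simp only [val_eq_addVal] at h ⊢
  exact AddValuation.map_le_sum _ h

lemma eps_zpow_ne_zero (k : ℤ) : eps K ^ k ≠ 0 :=
  zpow_ne_zero k (HahnSeries.single_ne_zero one_ne_zero)

lemma val_eps_zpow (k : ℤ) : val (eps K ^ k) = k := by
  rw [eps, ← RatFunc.single_zpow, val, HahnSeries.orderTop_single one_ne_zero]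

lemma val_le_val_mapRingHom {L : Type*} [Field L] (f : K →+* L) (x : LaurentSeries K) :
    val x ≤ val (HahnSeries.mapRingHom f x) := by
  rw [val, val, HahnSeries.le_orderTop_iff_forall]
  intro j hj
  rw [HahnSeries.coeff_mapRingHom, HahnSeries.coeff_eq_zero_of_lt_orderTop hj, map_zero]

lemma IsFrobenius.eq_mapRingHom {q : ℕ} {σ : LaurentSeries K → LaurentSeries K}
    (hσ : IsFrobenius K q σ) {f : K →+* K} (hf : ∀ a, f a = a ^ q) :
    σ = HahnSeries.mapRingHom f := by
  funext x
  ext j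
  rw [hσ, HahnSeries.coeff_mapRingHom, hf]

variable {n : ℕ}

def strictUpperFiltration (K : Type*) [Field K] (n : ℕ) (N c : ℤ) :
    AddSubgroup (Matrix (Fin n) (Fin n) (LaurentSeries K)) where
  carrier := {x | (∀ p q, q ≤ p → x p q = 0) ∧
    ∀ p q : Fin n, p < q → ((((q : ℤ) - (p : ℤ)) * N + c : ℤ) : WithTop ℤ) ≤ val (x p q)}
  zero_mem' := ⟨fun _ _ _ => rfl, fun _ _ _ => by simp [val_zero]⟩
  add_mem' {x y} hx hy := ⟨fun p q hqp => by simp [hx.1 p q hqp, hy.1 p q hqp],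
    fun p q hpq => (le_min (hx.2 p q hpq) (hy.2 p q hpq)).trans (min_val_le_val_add _ _)⟩
  neg_mem' {x} hx := ⟨fun p q hqp => by simp [hx.1 p q hqp], fun p q hpq => by
    simpa [val_neg] using hx.2 p q hpq⟩

variable {N a b c : ℤ} {x y : Matrix (Fin n) (Fin n) (LaurentSeries K)}

namespace strictUpperFiltration

lemma mul_mem (hx : x ∈ strictUpperFiltration K n N a) (hy : y ∈ strictUpperFiltration K n N b)
    (hc : c ≤ a + b) : x * y ∈ strictUpperFiltration K n N c := by
  refine ⟨fun p q hqp => ?_, fun p q hpq => ?_⟩ <;> rw [Matrix.mul_apply]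
  · refine Finset.sum_eq_zero fun r _ => ?_
    rcases le_or_gt r p with hrp | hpr
    · rw [hx.1 p r hrp, zero_mul]
    · rw [hy.1 r q (hqp.trans hpr.le), mul_zero]
  refine le_val_sum fun r _ => ?_
  rcases le_or_gt r p with hrp | hpr
  · simp [hx.1 p r hrp, val_zero]
  rcases le_or_gt q r with hqr | hrq
  · simp [hy.1 r q hqr, val_zero]
  rw [val_mul]
  calc ((((q : ℤ) - p) * N + c : ℤ) : WithTop ℤ)
      ≤ ((((r : ℤ) - p) * N + a : ℤ) : WithTop ℤ) +
          ((((q : ℤ) - r) * N + b : ℤ) : WithTop ℤ) := by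
        rw [← WithTop.coe_add, WithTop.coe_le_coe]; linarith
    _ ≤ val (x p r) + val (y r q) := add_le_add (hx.2 p r hpr) (hy.2 r q hrq)

lemma pow_succ_mem (hx : x ∈ strictUpperFiltration K n N c) (hc : 0 ≤ c) (k : ℕ) :
    x ^ (k + 1) ∈ strictUpperFiltration K n N c := by
  induction k with
  | zero => simpa using hx
  | succ k ih => exact pow_succ x (k + 1) ▸ mul_mem ih hx (by linarith)

lemma pow_eq_zero (hx : x ∈ strictUpperFiltration K n N c) : x ^ n = 0 := by
  simpa using Matrix.pow_card_eq_zero_of_strictUpper hx.1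

end strictUpperFiltration

lemma mem_UmN_iff_sub_one_mem {m : ℤ} {g : Matrix (Fin n) (Fin n) (LaurentSeries K)} :
    g ∈ UmN K n m N ↔ g - 1 ∈ strictUpperFiltration K n N m := by
  refine ⟨fun ⟨⟨hdiag, hlow⟩, hup⟩ => ⟨fun p q hqp => ?_, fun p q hpq => ?_⟩,
    fun ⟨hlow, hup⟩ => ⟨⟨fun p => ?_, fun p q hqp => ?_⟩, fun p q hpq => ?_⟩⟩
  · rcases hqp.eq_or_lt with rfl | hqp
    · simp [hdiag]
    · simp [hlow p q hqp, Matrix.one_apply_ne hqp.ne']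
  · simpa [Matrix.one_apply_ne hpq.ne] using hup p q hpq
  · simpa [sub_eq_zero] using hlow p p le_rfl
  · simpa [Matrix.one_apply_ne hqp.ne'] using hlow p q hqp.le
  · simpa [Matrix.one_apply_ne hpq.ne] using hup p q hpq

lemma UN_eq_UmN_zero : UN K n N = UmN K n 0 N := by
  simp [UN, UmN]

lemma one_mem_UmN {m : ℤ} : (1 : Matrix (Fin n) (Fin n) (LaurentSeries K)) ∈ UmN K n m N :=
  mem_UmN_iff_sub_one_mem.2 (by simp)

lemma Unitri.det_eq_one {g : Matrix (Fin n) (Fin n) (LaurentSeries K)} (hg : Unitri g) :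
    g.det = 1 := by
  rw [Matrix.det_of_isUpperTriangular hg.2]
  simp [hg.1]

lemma Unitri.mul_inv_cancel {g : Matrix (Fin n) (Fin n) (LaurentSeries K)} (hg : Unitri g) :
    g * g⁻¹ = 1 :=
  Matrix.mul_nonsing_inv g (by simp [hg.det_eq_one])

lemma Unitri.inv_mul_cancel {g : Matrix (Fin n) (Fin n) (LaurentSeries K)} (hg : Unitri g) :
    g⁻¹ * g = 1 :=
  Matrix.nonsing_inv_mul g (by simp [hg.det_eq_one])

lemma mul_mem_UmN {m : ℤ} (hm : 0 ≤ m) {g h : Matrix (Fin n) (Fin n) (LaurentSeries K)}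
    (hg : g ∈ UmN K n m N) (hh : h ∈ UmN K n m N) : g * h ∈ UmN K n m N := by
  rw [mem_UmN_iff_sub_one_mem] at *
  have : g * h - 1 = (g - 1) + (h - 1) + (g - 1) * (h - 1) := by noncomm_ring
  rw [this]
  exact add_mem (add_mem hg hh) (strictUpperFiltration.mul_mem hg hh (by linarith))

lemma inv_mem_UmN {m : ℤ} (hm : 0 ≤ m) {g : Matrix (Fin n) (Fin n) (LaurentSeries K)}
    (hg : g ∈ UmN K n m N) : g⁻¹ ∈ UmN K n m N := by
  rw [mem_UmN_iff_sub_one_mem] at *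
  set x := g - 1
  have hx : -x ∈ strictUpperFiltration K n N m := neg_mem hg
  have hinv : g⁻¹ = ∑ k ∈ Finset.range (n + 1), (-x) ^ k := by
    refine Matrix.inv_eq_right_inv ?_
    rw [show g = 1 - -x by simp [x], mul_neg_geom_sum, pow_succ,
      strictUpperFiltration.pow_eq_zero hx, zero_mul, sub_zero]
  rw [hinv, Finset.sum_range_succ', pow_zero, add_sub_cancel_right]
  exact sum_mem fun k _ => strictUpperFiltration.pow_succ_mem hx hm k

lemma mul_mem_of_mem_UN_left {h w : Matrix (Fin n) (Fin n) (LaurentSeries K)}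
    (hh : h ∈ UN K n N) (hw : w ∈ strictUpperFiltration K n N c) :
    h * w ∈ strictUpperFiltration K n N c := by
  rw [UN_eq_UmN_zero, mem_UmN_iff_sub_one_mem] at hh
  rw [show h * w = w + (h - 1) * w by noncomm_ring]
  exact add_mem hw (strictUpperFiltration.mul_mem hh hw (by simp))

lemma mul_mem_of_mem_UN_right {h w : Matrix (Fin n) (Fin n) (LaurentSeries K)}
    (hh : h ∈ UN K n N) (hw : w ∈ strictUpperFiltration K n N c) :
    w * h ∈ strictUpperFiltration K n N c := by
  rw [UN_eq_UmN_zero, mem_UmN_iff_sub_one_mem] at hh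
  rw [show w * h = w + w * (h - 1) by noncomm_ring]
  exact add_mem hw (strictUpperFiltration.mul_mem hw hh (by simp))

lemma inv_mul_mul_mem_UmN {m : ℤ} {h u : Matrix (Fin n) (Fin n) (LaurentSeries K)}
    (hh : h ∈ UN K n N) (hu : u ∈ UmN K n m N) : h⁻¹ * u * h ∈ UmN K n m N := by
  have hh' : h⁻¹ ∈ UN K n N := by
    rw [UN_eq_UmN_zero] at hh ⊢
    exact inv_mem_UmN le_rfl hh
  rw [mem_UmN_iff_sub_one_mem] at hu ⊢
  rw [show h⁻¹ * u * h - 1 = h⁻¹ * (u - 1) * h by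
    rw [Matrix.mul_sub, Matrix.sub_mul, Matrix.mul_one, hh.1.inv_mul_cancel]]
  exact mul_mem_of_mem_UN_right hh (mul_mem_of_mem_UN_left hh' hu)

def twistFrob (σ : LaurentSeries K → LaurentSeries K) (ν : Fin n → ℤ)
    (u : Matrix (Fin n) (Fin n) (LaurentSeries K)) : Matrix (Fin n) (Fin n) (LaurentSeries K) :=
  epsDiag K ν * u.map σ * epsDiag K (fun i => -ν i)

lemma twistFrob_apply (σ : LaurentSeries K → LaurentSeries K) (ν : Fin n → ℤ)
    (u : Matrix (Fin n) (Fin n) (LaurentSeries K)) (p q : Fin n) :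
    twistFrob σ ν u p q = eps K ^ ν p * σ (u p q) * eps K ^ (-ν q) := by
  simp [twistFrob, epsDiag, Matrix.mul_diagonal, Matrix.diagonal_mul]

lemma epsDiag_neg_mul_epsDiag (ν : Fin n → ℤ) :
    epsDiag K (fun i => -ν i) * epsDiag K ν = 1 := by
  simp [epsDiag, Matrix.diagonal_mul_diagonal, ← Matrix.diagonal_one, eps_zpow_ne_zero]

lemma fnu_eq_inv_mul_twistFrob (σ : LaurentSeries K → LaurentSeries K) (ν : Fin n → ℤ)
    (g : Matrix (Fin n) (Fin n) (LaurentSeries K)) : fnu σ ν g = g⁻¹ * twistFrob σ ν g := by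
  simp only [fnu, twistFrob, Matrix.mul_assoc]

lemma twistFrob_mul (φ : LaurentSeries K →+* LaurentSeries K) (ν : Fin n → ℤ)
    (g u : Matrix (Fin n) (Fin n) (LaurentSeries K)) :
    twistFrob φ ν (g * u) = twistFrob φ ν g * twistFrob φ ν u := by
  simp only [twistFrob, Matrix.map_mul, Matrix.mul_assoc]
  rw [← Matrix.mul_assoc (epsDiag K fun i => -ν i), epsDiag_neg_mul_epsDiag, Matrix.one_mul]

lemma fnu_mul (φ : LaurentSeries K →+* LaurentSeries K) (ν : Fin n → ℤ)
    (g u : Matrix (Fin n) (Fin n) (LaurentSeries K)) :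
    fnu φ ν (g * u) = u⁻¹ * fnu φ ν g * twistFrob φ ν u := by
  simp only [fnu_eq_inv_mul_twistFrob, twistFrob_mul, Matrix.mul_inv_rev, Matrix.mul_assoc]

lemma twistFrob_mem_UmN {m : ℤ} (φ : LaurentSeries K →+* LaurentSeries K)
    (hφ : ∀ x, val x ≤ val (φ x)) {ν : Fin n → ℤ} (hν : Antitone ν)
    {u : Matrix (Fin n) (Fin n) (LaurentSeries K)} (hu : u ∈ UmN K n m N) :
    twistFrob φ ν u ∈ UmN K n m N := by
  obtain ⟨⟨hdiag, hlow⟩, hup⟩ := hu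
  refine ⟨⟨fun p => ?_, fun p q hqp => ?_⟩, fun p q hpq => ?_⟩ <;> rw [twistFrob_apply]
  · simp [hdiag, eps_zpow_ne_zero]
  · simp [hlow p q hqp]
  · rw [val_mul, val_mul, val_eps_zpow, val_eps_zpow]
    calc ((((q : ℤ) - p) * N + m : ℤ) : WithTop ℤ)
        ≤ (ν p : WithTop ℤ) + ((((q : ℤ) - p) * N + m : ℤ) : WithTop ℤ) +
            ((-ν q : ℤ) : WithTop ℤ) := by
          rw [← WithTop.coe_add, ← WithTop.coe_add, WithTop.coe_le_coe]
          linarith [hν hpq.le]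
      _ ≤ _ := by gcongr; exact (hup p q hpq).trans (hφ _)

end

theorem fnu_preimage_mod_UmN_general (F : Type*) [Field F] [Fintype F]
    (n : ℕ)
    (σ : LaurentSeries (AlgebraicClosure F) → LaurentSeries (AlgebraicClosure F))
    (hσ : IsFrobenius (AlgebraicClosure F) (Fintype.card F) σ)
    (ν : Fin n → ℤ) (hν : StrictDominant ν) (N m : ℤ) (hm : 0 < m)
    (T : Set (Matrix (Fin n) (Fin n) (LaurentSeries (AlgebraicClosure F))))
    (hTU : T ⊆ UN (AlgebraicClosure F) n N)
    (hT : ∀ g ∈ T, ∀ u ∈ UmN (AlgebraicClosure F) n m N, g * u ∈ T) :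
    (∀ g ∈ UN (AlgebraicClosure F) n N, fnu σ ν g ∈ T →
      ∀ u ∈ UmN (AlgebraicClosure F) n m N, fnu σ ν (g * u) ∈ T) ∧
    (∀ g ∈ UN (AlgebraicClosure F) n N,
      ((∃ u ∈ UmN (AlgebraicClosure F) n m N, fnu σ ν g * u ∈ T) ↔ fnu σ ν g ∈ T)) := by
  set φ := HahnSeries.mapRingHom (Γ := ℤ)
    (FiniteField.frobeniusAlgHom F (AlgebraicClosure F)).toRingHom
  obtain rfl : σ = φ := hσ.eq_mapRingHom fun _ => rfl
  refine ⟨fun g _ hgT u hu => ?_, fun g _ => ⟨fun ⟨u, hu, hgu⟩ => ?_, fun hgT => ?_⟩⟩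
  · set h := fnu φ ν g
    have hh : h ∈ UN _ n N := hTU hgT
    -- `U_{m,N}` is normal in `U_N`, so `u⁻¹` can be moved to the right of `h`.
    have hfgu : fnu φ ν (g * u) = h * (h⁻¹ * u⁻¹ * h * twistFrob φ ν u) := by
      rw [fnu_mul, ← Matrix.mul_assoc, ← Matrix.mul_assoc, ← Matrix.mul_assoc,
        hh.1.mul_inv_cancel, Matrix.one_mul]
    rw [hfgu]
    exact hT h hgT _ (mul_mem_UmN hm.le (inv_mul_mul_mem_UmN hh (inv_mem_UmN hm.le hu))
      (twistFrob_mem_UmN φ (val_le_val_mapRingHom _) (StrictAnti.antitone hν) hu))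
  · simpa [Matrix.mul_assoc, hu.1.mul_inv_cancel] using hT _ hgu _ (inv_mem_UmN hm.le hu)
  · exact ⟨1, one_mem_UmN, by rwa [Matrix.mul_one]⟩

/-- let `ν` be strictly dominant and `T ⊆ U_N` with `T·U_{m,N} ⊆ T`.  Then
`f_ν⁻¹(T) ∩ U_N` is stable under right multiplication by `U_{m,N}`, and for `g ∈ U_N` the
coset `f_ν(g)·U_{m,N}` meets `T` iff `f_ν(g) ∈ T`; hence in `U_N/U_{m,N}` the preimage of
`T/U_{m,N}` under the map induced by `f_ν` equals `f_ν⁻¹(T)/U_{m,N}`. -/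
theorem fnu_preimage_mod_UmN (F : Type*) [Field F] [Fintype F]
    (n : ℕ) (hn : 2 ≤ n)
    (σ : LaurentSeries (AlgebraicClosure F) → LaurentSeries (AlgebraicClosure F))
    (hσ : IsFrobenius (AlgebraicClosure F) (Fintype.card F) σ)
    (ν : Fin n → ℤ) (hν : StrictDominant ν) (N m : ℤ) (hm : 0 < m)
    (T : Set (Matrix (Fin n) (Fin n) (LaurentSeries (AlgebraicClosure F))))
    (hTU : T ⊆ UN (AlgebraicClosure F) n N)
    (hT : ∀ g ∈ T, ∀ u ∈ UmN (AlgebraicClosure F) n m N, g * u ∈ T) :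
    (∀ g ∈ UN (AlgebraicClosure F) n N, fnu σ ν g ∈ T →
      ∀ u ∈ UmN (AlgebraicClosure F) n m N, fnu σ ν (g * u) ∈ T) ∧
    (∀ g ∈ UN (AlgebraicClosure F) n N,
      ((∃ u ∈ UmN (AlgebraicClosure F) n m N, fnu σ ν g * u ∈ T) ↔ fnu σ ν g ∈ T)) :=
  fnu_preimage_mod_UmN_general F n σ hσ ν hν N m hm T hTU hT
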